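/- arXiv:0903.0723 — 2 statements merged into one kernel-verified Lean document; each statement's English description precedes it below -/
import Mathlib

section
/- Every vector v ∈ ℕ⁶ of the form v = v_k + Σᵢ₌₁⁶ nᵢwᵢ with nᵢ ∈ ℕ, where v₁ = (1,1,1,1,1,1), v₂ = (1,2,2,1,1,1), v₃ = (1,2,2,2,1,1) and w₁,…,w₆ are the six vectors (1,1,1,0,0,0), (0,0,0,1,1,1), (0,1,0,0,0,1), (0,0,1,0,1,0), (0,1,0,1,0,0), (0,0,1,1,0,0), determines the index k and the coefficients n₁,…,n₆ uniquely. That is, if v_k + Σnᵢwᵢ = v_l + Σmᵢwᵢ then k = l and nᵢ = mᵢ for all i. -/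
/-- the starting vectors v₁, v₂, v₃ -/
def Vstart : Fin 3 → (Fin 6 → ℕ) :=
  ![![1,1,1,1,1,1], ![1,2,2,1,1,1], ![1,2,2,2,1,1]]

/-- the six extremal rays w₁,…,w₆ -/
def Wray : Fin 6 → (Fin 6 → ℕ) :=
  ![![1,1,1,0,0,0], ![0,0,0,1,1,1], ![0,1,0,0,0,1], ![0,0,1,0,1,0], ![0,1,0,1,0,0], ![0,0,1,1,0,0]]

theorem stmt12 (k l : Fin 3) (n m : Fin 6 → ℕ)
    (h : Vstart k + ∑ i : Fin 6, n i • Wray i = Vstart l + ∑ i : Fin 6, m i • Wray i) :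
    k = l ∧ n = m := by
  have h0 := congrFun h 0
  have h1 := congrFun h 1
  have h2 := congrFun h 2
  have h3 := congrFun h 3
  have h4 := congrFun h 4
  have h5 := congrFun h 5
  simp only [Pi.add_apply, Finset.sum_apply, Pi.smul_apply, smul_eq_mul,
    Fin.sum_univ_six, show Wray 0 0 = 1 from rfl, show Wray 0 1 = 1 from rfl, show Wray 0 2 = 1 from rfl, show Wray 0 3 = 0 from rfl, show Wray 0 4 = 0 from rfl, show Wray 0 5 = 0 from rfl, show Wray 1 0 = 0 from rfl, show Wray 1 1 = 0 from rfl, show Wray 1 2 = 0 from rfl, show Wray 1 3 = 1 from rfl, show Wray 1 4 = 1 from rfl, show Wray 1 5 = 1 from rfl, show Wray 2 0 = 0 from rfl, show Wray 2 1 = 1 from rfl, show Wray 2 2 = 0 from rfl, show Wray 2 3 = 0 from rfl, show Wray 2 4 = 0 from rfl, show Wray 2 5 = 1 from rfl, show Wray 3 0 = 0 from rfl, show Wray 3 1 = 0 from rfl, show Wray 3 2 = 1 from rfl, show Wray 3 3 = 0 from rfl, show Wray 3 4 = 1 from rfl, show Wray 3 5 = 0 from rfl, show Wray 4 0 = 0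 from rfl, show Wray 4 1 = 1 from rfl, show Wray 4 2 = 0 from rfl, show Wray 4 3 = 1 from rfl, show Wray 4 4 = 0 from rfl, show Wray 4 5 = 0 from rfl, show Wray 5 0 = 0 from rfl, show Wray 5 1 = 0 from rfl, show Wray 5 2 = 1 from rfl, show Wray 5 3 = 1 from rfl, show Wray 5 4 = 0 from rfl, show Wray 5 5 = 0 from rfl] at h0 h1 h2 h3 h4 h5
  fin_cases k <;> fin_cases l <;>
    simp only [Fin.reduceFinMk, Fin.mk_zero, Fin.mk_one, Fin.isValue,
      show Vstart 0 0 = 1 from rfl, show Vstart 0 1 = 1 from rfl, show Vstart 0 2 = 1 from rfl, show Vstart 0 3 = 1 from rfl, show Vstart 0 4 = 1 from rfl, show Vstart 0 5 = 1 from rfl, show Vstart 1 0 = 1 from rfl, show Vstart 1 1 = 2 from rfl, show Vstart 1 2 = 2 from rfl, show Vstart 1 3 = 1 from rfl, show Vstart 1 4 = 1 from rfl, show Vstart 1 5 = 1 from rfl, show Vstart 2 0 = 1 from rfl, show Vstart 2 1 = 2 from rfl, show Vstart 2 2 = 2 from rfl, show Vstart 2 3 = 2 from rfl, show Vstart 2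 4 = 1 from rfl, show Vstart 2 5 = 1 from rfl] at h0 h1 h2 h3 h4 h5 <;>
    exact ⟨by first | rfl | (exfalso; omega),
      by funext i; fin_cases i; exacts [show n 0 = m 0 by omega, show n 1 = m 1 by omega, show n 2 = m 2 by omega, show n 3 = m 3 by omega, show n 4 = m 4 by omega, show n 5 = m 5 by omega]⟩
end

section
/- For k = (k₁,…,k₈) ∈ ℕ⁸ and α = (k₁+k₃+k₆+1, k₁+k₄+k₇+1, k₁+k₅+k₈+1, k₂+k₅+k₇+1, k₂+k₃+k₈+1, k₂+k₄+k₆+1), the discriminant satisfies D(α) = −6Σ_{1≤i<j≤8} kᵢkⱼ − 12k₁k₂ + 6k₃k₇ + 6k₄k₈ + 6k₅k₆ − 18k₁ − 18k₂ − 12(k₃+k₄+k₅+k₆+k₇+k₈) − 18. -/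
theorem stmt15 (k1 k2 k3 k4 k5 k6 k7 k8 : ℕ) :
    (((2*((k1:ℤ)+k3+k6+1)^2 + 2*((k1:ℤ)+k3+k6+1)*((k2:ℤ)+k5+k7+1) + 2*((k2:ℤ)+k5+k7+1)^2) + (2*((k1:ℤ)+k4+k7+1)^2 + 2*((k1:ℤ)+k4+k7+1)*((k2:ℤ)+k3+k8+1) + 2*((k2:ℤ)+k3+k8+1)^2) + (2*((k1:ℤ)+k5+k8+1)^2 + 2*((k1:ℤ)+k5+k8+1)*((k2:ℤ)+k4+k6+1) + 2*((k2:ℤ)+k4+k6+1)^2)) - 2*((((k1:ℤ)+k3+k6+1)*((k1:ℤ)+k4+k7+1) + 2*((k1:ℤ)+k3+k6+1)*((k2:ℤ)+k3+k8+1) + 2*((k2:ℤ)+k5+k7+1)*((k1:ℤ)+k4+k7+1) + ((k2:ℤ)+k5+k7+1)*((k2:ℤ)+k3+k8+1)) + (((k1:ℤ)+k3+k6+1)*((k1:ℤ)+k5+k8+1) + 2*((k1:ℤ)+k3+k6+1)*((k2:ℤ)+k4+k6+1) + 2*((k2:ℤ)+k5+k7+1)*((k1:ℤ)+k5+k8+1)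 + ((k2:ℤ)+k5+k7+1)*((k2:ℤ)+k4+k6+1)) + (((k1:ℤ)+k4+k7+1)*((k1:ℤ)+k5+k8+1) + 2*((k1:ℤ)+k4+k7+1)*((k2:ℤ)+k4+k6+1) + 2*((k2:ℤ)+k3+k8+1)*((k1:ℤ)+k5+k8+1) + ((k2:ℤ)+k3+k8+1)*((k2:ℤ)+k4+k6+1))))
    = -6*((k1:ℤ)*k2 + (k1:ℤ)*k3 + (k1:ℤ)*k4 + (k1:ℤ)*k5 + (k1:ℤ)*k6 + (k1:ℤ)*k7 + (k1:ℤ)*k8 + (k2:ℤ)*k3 + (k2:ℤ)*k4 + (k2:ℤ)*k5 + (k2:ℤ)*k6 + (k2:ℤ)*k7 + (k2:ℤ)*k8 + (k3:ℤ)*k4 + (k3:ℤ)*k5 + (k3:ℤ)*k6 + (k3:ℤ)*k7 + (k3:ℤ)*k8 + (k4:ℤ)*k5 + (k4:ℤ)*k6 + (k4:ℤ)*k7 + (k4:ℤ)*k8 + (k5:ℤ)*k6 + (k5:ℤ)*k7 + (k5:ℤ)*k8 + (k6:ℤ)*k7 + (k6:ℤ)*k8 + (k7:ℤ)*k8)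
      - 12*(k1:ℤ)*k2 + 6*(k3:ℤ)*k7 + 6*(k4:ℤ)*k8 + 6*(k5:ℤ)*k6
      - 18*(k1:ℤ) - 18*(k2:ℤ) - 12*((k3:ℤ)+k4+k5+k6+k7+k8) - 18 := by
  ring
end
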